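/- arXiv:1201.5993 — 8 statements merged into one kernel-verified Lean document; each statement's English description precedes it below -/
import Mathlib

section
/- Let H be a real Hilbert space and let (f_i)_{i∈ℕ} be a frame for H with bounds A, B > 0. Let (g_i)_{i∈ℕ} be a sequence in H and let λ₁, λ₂, μ ≥ 0 satisfy λ₂ < 1 and λ₁ + μ/√A < 1. Assume that for every finite set F ⊆ ℕ and every choice of scalars c : ℕ → ℝ one has ‖∑_{i∈F} c_i (f_i − g_i)‖ ≤ λ₁ ‖∑_{i∈F} c_i f_i‖ + λ₂ ‖∑_{i∈F} c_i g_i‖ + μ (∑_{i∈F} c_i²)^{1/2}. Then (g_i)_{i∈ℕ} is a frame for H with bounds A·(1 − (λ₁ + λ₂ + μ/√A)/(1 + λ₂))² and B·(1 + (λ₁ + λ₂ + μ/√B)/(1 − λ₂))²; that is, for every x ∈ H the family (⟨x, g_i⟩²)_{i∈ℕ} is summable and A·(1 − (λ₁ + λ₂ + μ/√A)/(1 + λ₂))²·‖x‖² ≤ ∑_{i=1}^∞ ⟨x, g_i⟩² ≤ B·(1 + (λ₁ + λ₂ + μ/√B)/(1 − λ₂))²·‖x‖². -/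
open scoped RealInnerProductSpace

/-!
Write `T c = ∑ cᵢ gᵢ`. The perturbation hypothesis gives
`‖T c‖ ≤ (1 + λ₁) ‖∑ cᵢ fᵢ‖ + λ₂ ‖T c‖ + μ ‖c‖₂`, hence `‖T c‖ ≤ ((1 + λ₁)√B + μ)/(1 - λ₂) ‖c‖₂`,
which is the upper frame bound.

For the lower bound let `R = S⁻¹`, where the frame operator `S` of `f` is invertible by Lax–Milgram,
so that `x = ∑ ⟪R x, fᵢ⟫ fᵢ` with coefficients of ℓ²-norm at most `‖x‖/√A`. Replacing `fᵢ` by `gᵢ`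
gives an operator `V` with `‖x - V x‖ ≤ (λ₁ + μ/√A) ‖x‖ + λ₂ ‖V x‖`. This estimate persists along
the segment from `1` to `V` and bounds the inverses there uniformly, so invertibility propagates
from `1` to `V`. Hence every `x` is some `∑ cᵢ gᵢ` with `‖c‖₂` controlled by `‖x‖`, and
Cauchy–Schwarz in `‖x‖² = ∑ cᵢ ⟪x, gᵢ⟫` gives the lower bound.
-/

section Synthesis

variable {E : Type*} [NormedAddCommGroup E] [NormedSpace ℝ E]

def HasSynthesisBound (g : ℕ → E) (C : ℝ) : Prop :=
  ∀ (F : Finset ℕ) (c : ℕ → ℝ), ‖∑ i ∈ F, c i • g i‖ ≤ C * √(∑ i ∈ F, c i ^ 2)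

namespace HasSynthesisBound

variable {g : ℕ → E} {C : ℝ}

theorem nonneg (hg : HasSynthesisBound g C) : 0 ≤ C := by
  simpa using (norm_nonneg _).trans (hg {0} fun _ => 1)

theorem of_perturbation {f : ℕ → E} {Cf lam1 lam2 mu : ℝ} (hf : HasSynthesisBound f Cf)
    (hlam1 : 0 ≤ lam1) (hlam2 : lam2 < 1)
    (hpert : ∀ (F : Finset ℕ) (c : ℕ → ℝ),
      ‖∑ i ∈ F, c i • (f i - g i)‖ ≤ lam1 * ‖∑ i ∈ F, c i • f i‖ +
        lam2 * ‖∑ i ∈ F, c i • g i‖ + mu * √(∑ i ∈ F, c i ^ 2)) :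
    HasSynthesisBound g (((1 + lam1) * Cf + mu) / (1 - lam2)) := by
  intro F c
  have htri : ‖∑ i ∈ F, c i • g i‖ ≤ ‖∑ i ∈ F, c i • f i‖ + ‖∑ i ∈ F, c i • (f i - g i)‖ := by
    simpa only [smul_sub, Finset.sum_sub_distrib, sub_sub_cancel] using
      norm_sub_le (∑ i ∈ F, c i • f i) (∑ i ∈ F, c i • (f i - g i))
  rw [div_mul_eq_mul_div, le_div_iff₀ (by linarith)]
  nlinarith [hpert F c, hf F c, norm_nonneg (∑ i ∈ F, c i • f i)]

theorem summable_smul [CompleteSpace E] (hg : HasSynthesisBound g C) {c : ℕ → ℝ}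
    (hc : Summable fun i => c i ^ 2) : Summable fun i => c i • g i := by
  have hC := hg.nonneg
  refine summable_iff_vanishing_norm.2 fun ε hε => ?_
  obtain ⟨s, hs⟩ := summable_iff_vanishing_norm.1 hc ((ε / (C + 1)) ^ 2) (by positivity)
  refine ⟨s, fun t ht => ?_⟩
  have htail : √(∑ i ∈ t, c i ^ 2) < ε / (C + 1) := by
    have := hs t ht
    rw [Real.norm_of_nonneg (Finset.sum_nonneg fun i _ => sq_nonneg _)] at this
    exact Real.sqrt_lt' (by positivity) |>.2 this
  calc ‖∑ i ∈ t, c i • g i‖ ≤ C * √(∑ i ∈ t, c i ^ 2) := hg t c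
    _ ≤ (C + 1) * √(∑ i ∈ t, c i ^ 2) := by gcongr; linarith
    _ < ε := by rwa [lt_div_iff₀ (by linarith), mul_comm] at htail

theorem norm_le_of_hasSum (hg : HasSynthesisBound g C) {c : ℕ → ℝ}
    (hc : Summable fun i => c i ^ 2) {y : E} (hy : HasSum (fun i => c i • g i) y) :
    ‖y‖ ≤ C * √(∑' i, c i ^ 2) :=
  le_of_tendsto' (continuous_norm.tendsto y |>.comp hy) fun F =>
    (hg F c).trans (by
      gcongr
      · exact hg.nonneg
      · exact hc.sum_le_tsum F fun i _ => sq_nonneg _)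

end HasSynthesisBound

theorem norm_sub_le_of_perturbation_of_hasSum {f g : ℕ → E} {lam1 lam2 mu : ℝ}
    (hpert : ∀ (F : Finset ℕ) (c : ℕ → ℝ),
      ‖∑ i ∈ F, c i • (f i - g i)‖ ≤ lam1 * ‖∑ i ∈ F, c i • f i‖ +
        lam2 * ‖∑ i ∈ F, c i • g i‖ + mu * √(∑ i ∈ F, c i ^ 2))
    {c : ℕ → ℝ} (hc : Summable fun i => c i ^ 2) {a b : E}
    (ha : HasSum (fun i => c i • f i) a) (hb : HasSum (fun i => c i • g i) b) :
    ‖a - b‖ ≤ lam1 * ‖a‖ + lam2 * ‖b‖ + mu * √(∑' i, c i ^ 2) := by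
  have hab : HasSum (fun i => c i • (f i - g i)) (a - b) := by
    simpa only [smul_sub] using ha.sub hb
  refine le_of_tendsto_of_tendsto' (continuous_norm.tendsto _ |>.comp hab) ?_ (hpert · c)
  exact ((continuous_norm.tendsto _ |>.comp ha).const_mul lam1).add
    ((continuous_norm.tendsto _ |>.comp hb).const_mul lam2) |>.add
    ((Real.continuous_sqrt.tendsto _ |>.comp hc.hasSum).const_mul mu)

end Synthesis

section Bessel

variable {H : Type*} [NormedAddCommGroup H] [InnerProductSpace ℝ H]

def IsBesselSeq (f : ℕ → H) (B : ℝ) : Prop :=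
  ∀ x, Summable (fun i => ⟪x, f i⟫ ^ 2) ∧ ∑' i, ⟪x, f i⟫ ^ 2 ≤ B * ‖x‖ ^ 2

theorem HasSum.inner_smul_left {g : ℕ → H} {c : ℕ → ℝ} {y : H}
    (hy : HasSum (fun i => c i • g i) y) (x : H) :
    HasSum (fun i => c i * ⟪x, g i⟫) ⟪x, y⟫ := by
  simpa only [map_smul, smul_eq_mul, innerSL_apply_apply] using hy.mapL (innerSL ℝ x)

theorem IsBesselSeq.sqrt_tsum_le {f : ℕ → H} {B : ℝ} (hf : IsBesselSeq f B) (x : H) :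
    √(∑' i, ⟪x, f i⟫ ^ 2) ≤ √B * ‖x‖ := by
  rw [← Real.sqrt_sq (norm_nonneg x), ← Real.sqrt_mul' _ (sq_nonneg _)]
  exact Real.sqrt_le_sqrt (hf x).2

theorem IsBesselSeq.hasSynthesisBound {f : ℕ → H} {B : ℝ} (hf : IsBesselSeq f B) :
    HasSynthesisBound f √B := by
  intro F c
  set y := ∑ i ∈ F, c i • f i with hy_def
  have hy : ‖y‖ ^ 2 = ∑ i ∈ F, c i * ⟪y, f i⟫ := by
    rw [← real_inner_self_eq_norm_sq]
    nth_rewrite 1 [hy_def]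
    simp only [sum_inner, real_inner_smul_left, real_inner_comm]
  have hfin : √(∑ i ∈ F, ⟪y, f i⟫ ^ 2) ≤ √B * ‖y‖ :=
    (Real.sqrt_le_sqrt ((hf y).1.sum_le_tsum F fun i _ => sq_nonneg _)).trans (hf.sqrt_tsum_le y)
  have hcs : ‖y‖ ^ 2 ≤ √(∑ i ∈ F, c i ^ 2) * (√B * ‖y‖) :=
    hy ▸ (Real.sum_mul_le_sqrt_mul_sqrt F c _).trans
      (mul_le_mul_of_nonneg_left hfin (Real.sqrt_nonneg _))
  rcases (norm_nonneg y).eq_or_lt with h | h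
  · rw [← h]; positivity
  · nlinarith

theorem HasSynthesisBound.isBesselSeq {g : ℕ → H} {C : ℝ} (hg : HasSynthesisBound g C) :
    IsBesselSeq g (C ^ 2) := by
  intro x
  have hfin : ∀ F : Finset ℕ, ∑ i ∈ F, ⟪x, g i⟫ ^ 2 ≤ C ^ 2 * ‖x‖ ^ 2 := by
    intro F
    set S := ∑ i ∈ F, ⟪x, g i⟫ ^ 2
    have hS : S = ⟪x, ∑ i ∈ F, ⟪x, g i⟫ • g i⟫ := by
      simp only [S, inner_sum, real_inner_smul_right, sq]
    have hcs : S ≤ ‖x‖ * (C * √S) :=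
      calc S = ⟪x, ∑ i ∈ F, ⟪x, g i⟫ • g i⟫ := hS
        _ ≤ ‖x‖ * ‖∑ i ∈ F, ⟪x, g i⟫ • g i‖ := real_inner_le_norm _ _
        _ ≤ ‖x‖ * (C * √S) := mul_le_mul_of_nonneg_left (hg F _) (norm_nonneg x)
    have hS0 : 0 ≤ S := Finset.sum_nonneg fun i _ => sq_nonneg _
    nlinarith [Real.sq_sqrt hS0, Real.sqrt_nonneg S, sq_nonneg (√S - C * ‖x‖)]
  have hsum := summable_of_sum_le (fun i => sq_nonneg _) hfin
  exact ⟨hsum, hsum.tsum_le_of_sum_le hfin⟩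

theorem norm_sq_le_of_hasSum_smul {g : ℕ → H} {c : ℕ → ℝ} {x : H}
    (hc : Summable fun i => c i ^ 2) (hg : Summable fun i => ⟪x, g i⟫ ^ 2)
    (hx : HasSum (fun i => c i • g i) x) :
    ‖x‖ ^ 2 ≤ √(∑' i, c i ^ 2) * √(∑' i, ⟪x, g i⟫ ^ 2) := by
  rw [← real_inner_self_eq_norm_sq]
  refine hasSum_le_of_sum_le (hx.inner_smul_left x) fun F =>
    (Real.sum_mul_le_sqrt_mul_sqrt F c _).trans ?_
  gcongr
  · exact hc.sum_le_tsum F fun i _ => sq_nonneg _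
  · exact hg.sum_le_tsum F fun i _ => sq_nonneg _

theorem IsBesselSeq.exists_hasSum_inner_smul {E : Type*} [NormedAddCommGroup E]
    [NormedSpace ℝ E] [CompleteSpace E] {f : ℕ → H} {g : ℕ → E} {B C : ℝ}
    (hf : IsBesselSeq f B) (hg : HasSynthesisBound g C) :
    ∃ T : H →L[ℝ] E, ∀ x, HasSum (fun i => ⟪x, f i⟫ • g i) (T x) := by
  have hsum x := (hg.summable_smul (hf x).1).hasSum
  refine ⟨LinearMap.mkContinuous
    { toFun := fun x => ∑' i, ⟪x, f i⟫ • g i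
      map_add' := fun x y => by
        simpa only [inner_add_left, add_smul] using ((hsum x).add (hsum y)).tsum_eq
      map_smul' := fun r x => by
        simpa only [real_inner_smul_left, smul_smul, RingHom.id_apply] using
          ((hsum x).const_smul r).tsum_eq }
    (C * √B) fun x => ?_, hsum⟩
  calc ‖∑' i, ⟪x, f i⟫ • g i‖ ≤ C * √(∑' i, ⟪x, f i⟫ ^ 2) :=
        hg.norm_le_of_hasSum (hf x).1 (hsum x)
    _ ≤ C * (√B * ‖x‖) := mul_le_mul_of_nonneg_left (hf.sqrt_tsum_le x) hg.nonneg
    _ = C * √B * ‖x‖ := (mul_assoc _ _ _).symm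

theorem IsBesselSeq.exists_reconstruction [CompleteSpace H] {f : ℕ → H} {A B : ℝ}
    (hf : IsBesselSeq f B) (hA : 0 < A) (hlower : ∀ x, A * ‖x‖ ^ 2 ≤ ∑' i, ⟪x, f i⟫ ^ 2) :
    ∃ R : H →L[ℝ] H, ∀ x, HasSum (fun i => ⟪R x, f i⟫ • f i) x ∧
      ∑' i, ⟪R x, f i⟫ ^ 2 ≤ ‖x‖ ^ 2 / A := by
  obtain ⟨S, hS⟩ := hf.exists_hasSum_inner_smul hf.hasSynthesisBound
  have hS_inner x : ⟪x, S x⟫ = ∑' i, ⟪x, f i⟫ ^ 2 := by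
    simpa only [sq] using ((hS x).inner_smul_left x).tsum_eq.symm
  have hcoercive : IsCoercive ((innerSL ℝ).comp S) := ⟨A, hA, fun u => by
    simpa only [ContinuousLinearMap.comp_apply, innerSL_apply_apply, real_inner_comm,
      hS_inner, mul_assoc, ← sq] using hlower u⟩
  set e := hcoercive.continuousLinearEquivOfBilin
  have he v : e v = S v := ext_inner_right ℝ fun w => by
    simp [e, IsCoercive.continuousLinearEquivOfBilin_apply]
  refine ⟨e.symm, fun x => ⟨by simpa [← he] using hS (e.symm x), ?_⟩⟩
  rw [ContinuousLinearEquiv.coe_coe]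
  set y := e.symm x
  have hy : ∑' i, ⟪y, f i⟫ ^ 2 = ⟪y, x⟫ := by
    rw [← hS_inner, ← he, ContinuousLinearEquiv.apply_symm_apply]
  have hyx := real_inner_le_norm y x
  have hAy : A * ‖y‖ ≤ ‖x‖ := by
    rcases (norm_nonneg y).eq_or_lt with h | h
    · rw [← h, mul_zero]; exact norm_nonneg x
    · nlinarith [hlower y]
  rw [hy, le_div_iff₀ hA]
  nlinarith [mul_le_mul_of_nonneg_right hyx hA.le,
    mul_le_mul_of_nonneg_right hAy (norm_nonneg x)]

theorem sq_mul_norm_sq_le_tsum_of_hasSum {g : ℕ → H} {c : ℕ → ℝ} {x : H} {K : ℝ}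
    (hc : Summable fun i => c i ^ 2) (hg : Summable fun i => ⟪x, g i⟫ ^ 2)
    (hx : HasSum (fun i => c i • g i) x) (hK : 0 ≤ K) (hcK : K * √(∑' i, c i ^ 2) ≤ ‖x‖) :
    K ^ 2 * ‖x‖ ^ 2 ≤ ∑' i, ⟪x, g i⟫ ^ 2 := by
  set G := ∑' i, ⟪x, g i⟫ ^ 2
  have hcs := norm_sq_le_of_hasSum_smul hc hg hx
  have hKx : K * ‖x‖ ≤ √G := by
    rcases (norm_nonneg x).eq_or_lt with h | h
    · rw [← h, mul_zero]; exact Real.sqrt_nonneg G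
    · nlinarith [mul_le_mul_of_nonneg_left hcs hK,
        mul_le_mul_of_nonneg_right hcK (Real.sqrt_nonneg G)]
  calc K ^ 2 * ‖x‖ ^ 2 = (K * ‖x‖) ^ 2 := by ring
    _ ≤ √G ^ 2 := pow_le_pow_left₀ (by positivity) hKx 2
    _ = G := Real.sq_sqrt (tsum_nonneg fun i => sq_nonneg _)

end Bessel

section Perturbation

theorem mul_norm_le_of_norm_sub_le {E : Type*} [SeminormedAddCommGroup E] {x y : E} {l1 l2 : ℝ}
    (h : ‖x - y‖ ≤ l1 * ‖x‖ + l2 * ‖y‖) : (1 - l1) * ‖x‖ ≤ (1 + l2) * ‖y‖ := by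
  linarith [norm_le_norm_add_norm_sub' x y]

variable {E : Type*} [NormedAddCommGroup E] [NormedSpace ℝ E]

theorem norm_sub_add_smul_sub_le {x y : E} {l1 l2 t : ℝ}
    (h : ‖x - y‖ ≤ l1 * ‖x‖ + l2 * ‖y‖) (hl2 : 0 ≤ l2) (hl2' : l2 ≤ 1)
    (ht : t ∈ Set.Icc (0 : ℝ) 1) :
    ‖x - (x + t • (y - x))‖ ≤ l1 * ‖x‖ + l2 * ‖x + t • (y - x)‖ := by
  obtain ⟨ht0, ht1⟩ := ht
  set z := x + t • (y - x)
  have hz : ‖x - z‖ = t * ‖x - y‖ := by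
    rw [sub_add_cancel_left, norm_neg, norm_smul, Real.norm_of_nonneg ht0, norm_sub_rev]
  have hy : ‖y‖ ≤ ‖z‖ + (1 - t) * ‖x - y‖ := by
    have : y = z + (1 - t) • (y - x) := by simp only [z, sub_smul, one_smul]; abel
    calc ‖y‖ = ‖z + (1 - t) • (y - x)‖ := congrArg _ this
      _ ≤ ‖z‖ + ‖(1 - t) • (y - x)‖ := norm_add_le _ _
      _ = ‖z‖ + (1 - t) * ‖x - y‖ := by
        rw [norm_smul, Real.norm_of_nonneg (by linarith), norm_sub_rev]
  rw [hz]
  nlinarith [norm_nonneg (x - y), mul_le_mul_of_nonneg_left hy hl2,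
    mul_nonneg (sub_nonneg.2 ht1) (sub_nonneg.2 hl2')]

theorem isUnit_of_continuous_of_norm_inv_le {R : Type*} [NormedRing R] [HasSummableGeomSeries R]
    {Φ : unitInterval → R} (hΦ : Continuous Φ) {K : ℝ}
    (hK : ∀ t (u : Rˣ), ↑u = Φ t → ‖(↑u⁻¹ : R)‖ ≤ K) (h0 : IsUnit (Φ 0)) (t : unitInterval) :
    IsUnit (Φ t) := by
  nontriviality R
  suffices hclosed : IsClosed {t | IsUnit (Φ t)} from
    Set.eq_univ_iff_forall.1 (IsClopen.eq_univ ⟨hclosed, Units.isOpen.preimage hΦ⟩ ⟨0, h0⟩) t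
  refine closure_subset_iff_isClosed.1 fun t ht => ?_
  obtain ⟨u0, hu0⟩ := h0
  have hK0 : 0 < K := (Units.norm_pos u0⁻¹).trans_le (hK 0 u0 hu0)
  obtain ⟨δ, hδ, hΦδ⟩ := Metric.continuousAt_iff.1 hΦ.continuousAt K⁻¹ (inv_pos.2 hK0)
  obtain ⟨s, ⟨u, hu⟩, hst⟩ := Metric.mem_closure_iff.1 ht δ hδ
  have hnear : ‖Φ t - u‖ < ‖(↑u⁻¹ : R)‖⁻¹ := by
    rw [hu, ← dist_eq_norm, dist_comm]
    exact (hΦδ (by rwa [dist_comm])).trans_le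
      (inv_anti₀ (Units.norm_pos u⁻¹) (hK s u hu))
  exact (u.ofNearby _ hnear).isUnit

theorem ContinuousLinearMap.isUnit_of_norm_sub_le [CompleteSpace E] (V : E →L[ℝ] E) {l1 l2 : ℝ}
    (hl1 : l1 < 1) (hl2 : 0 ≤ l2) (hl2' : l2 ≤ 1)
    (hV : ∀ x, ‖x - V x‖ ≤ l1 * ‖x‖ + l2 * ‖V x‖) : IsUnit V := by
  set Φ : unitInterval → E →L[ℝ] E := fun t => 1 + (t : ℝ) • (V - 1)
  have hΦ t x : ‖x - Φ t x‖ ≤ l1 * ‖x‖ + l2 * ‖Φ t x‖ :=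
    norm_sub_add_smul_sub_le (hV x) hl2 hl2' t.2
  have hK t (u : (E →L[ℝ] E)ˣ) (hu : ↑u = Φ t) : ‖(↑u⁻¹ : E →L[ℝ] E)‖ ≤ (1 + l2) / (1 - l1) := by
    refine ContinuousLinearMap.opNorm_le_bound _ (by apply div_nonneg <;> linarith) fun y => ?_
    have := mul_norm_le_of_norm_sub_le (hΦ t ((↑u⁻¹ : E →L[ℝ] E) y))
    rw [← hu, ← mul_apply_eq_comp, u.mul_inv, one_apply_eq_self] at this
    rw [div_mul_eq_mul_div, le_div_iff₀ (by linarith)]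
    linarith
  have h1 := isUnit_of_continuous_of_norm_inv_le (Φ := Φ) (by fun_prop) hK (by simp [Φ]) 1
  simpa [Φ] using h1

end Perturbation

theorem exists_hasSum_smul_of_perturbation {H : Type*} [NormedAddCommGroup H]
    [InnerProductSpace ℝ H] [CompleteSpace H] {f g : ℕ → H}
    {A B C lam1 lam2 mu : ℝ} (hf : IsBesselSeq f B) (hA : 0 < A)
    (hlower : ∀ x, A * ‖x‖ ^ 2 ≤ ∑' i, ⟪x, f i⟫ ^ 2) (hg : HasSynthesisBound g C)
    (hlam2 : 0 ≤ lam2) (hlam2le : lam2 ≤ 1) (hmu : 0 ≤ mu) (hmain : lam1 + mu / √A < 1)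
    (hpert : ∀ (F : Finset ℕ) (c : ℕ → ℝ),
      ‖∑ i ∈ F, c i • (f i - g i)‖ ≤ lam1 * ‖∑ i ∈ F, c i • f i‖ +
        lam2 * ‖∑ i ∈ F, c i • g i‖ + mu * √(∑ i ∈ F, c i ^ 2)) (x : H) :
    ∃ c : ℕ → ℝ, (Summable fun i => c i ^ 2) ∧ HasSum (fun i => c i • g i) x ∧
      √A * (1 - (lam1 + mu / √A)) / (1 + lam2) * √(∑' i, c i ^ 2) ≤ ‖x‖ := by
  obtain ⟨R, hR⟩ := hf.exists_reconstruction hA hlower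
  obtain ⟨T, hT⟩ := hf.exists_hasSum_inner_smul hg
  have hsA : 0 < √A := Real.sqrt_pos.2 hA
  have hcoeff x : √(∑' i, ⟪R x, f i⟫ ^ 2) ≤ ‖x‖ / √A := by
    rw [← Real.sqrt_sq (norm_nonneg x), ← Real.sqrt_div' _ hA.le]
    exact Real.sqrt_le_sqrt (hR x).2
  have hV x : ‖x - T (R x)‖ ≤ (lam1 + mu / √A) * ‖x‖ + lam2 * ‖T (R x)‖ :=
    calc ‖x - T (R x)‖ ≤ lam1 * ‖x‖ + lam2 * ‖T (R x)‖ + mu * √(∑' i, ⟪R x, f i⟫ ^ 2) :=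
          norm_sub_le_of_perturbation_of_hasSum hpert (hf (R x)).1 (hR x).1 (hT (R x))
      _ ≤ lam1 * ‖x‖ + lam2 * ‖T (R x)‖ + mu * (‖x‖ / √A) := by gcongr; exact hcoeff x
      _ = (lam1 + mu / √A) * ‖x‖ + lam2 * ‖T (R x)‖ := by ring
  have hunit := (T.comp R).isUnit_of_norm_sub_le hmain hlam2 hlam2le hV
  obtain ⟨y, rfl⟩ := (ContinuousLinearMap.isUnit_iff_bijective.1 hunit).2 x
  refine ⟨fun i => ⟪R y, f i⟫, (hf (R y)).1, hT (R y), ?_⟩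
  calc √A * (1 - (lam1 + mu / √A)) / (1 + lam2) * √(∑' i, ⟪R y, f i⟫ ^ 2)
      ≤ √A * (1 - (lam1 + mu / √A)) / (1 + lam2) * (‖y‖ / √A) := by
        gcongr
        exact hcoeff y
    _ = (1 - (lam1 + mu / √A)) * ‖y‖ / (1 + lam2) := by field_simp
    _ ≤ ‖T (R y)‖ := by
        rw [div_le_iff₀ (by linarith)]
        linarith [mul_norm_le_of_norm_sub_le (hV y)]

/-- Perturbation of frames in a real Hilbert space (Casazza–Christensen). -/
theorem frame_perturbation
    {H : Type*} [NormedAddCommGroup H] [InnerProductSpace ℝ H] [CompleteSpace H]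
    (f g : ℕ → H) (A B lam1 lam2 mu : ℝ) (hA : 0 < A) (hB : 0 < B)
    (hframe : ∀ x : H, Summable (fun i => ⟪x, f i⟫ ^ 2) ∧
      A * ‖x‖ ^ 2 ≤ ∑' i, ⟪x, f i⟫ ^ 2 ∧ (∑' i, ⟪x, f i⟫ ^ 2) ≤ B * ‖x‖ ^ 2)
    (hlam1 : 0 ≤ lam1) (hlam2 : 0 ≤ lam2) (hmu : 0 ≤ mu)
    (hlam2lt : lam2 < 1) (hmain : lam1 + mu / Real.sqrt A < 1)
    (hpert : ∀ (F : Finset ℕ) (c : ℕ → ℝ),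
      ‖∑ i ∈ F, c i • (f i - g i)‖ ≤ lam1 * ‖∑ i ∈ F, c i • f i‖ +
        lam2 * ‖∑ i ∈ F, c i • g i‖ + mu * Real.sqrt (∑ i ∈ F, c i ^ 2)) :
    ∀ x : H, Summable (fun i => ⟪x, g i⟫ ^ 2) ∧
      A * (1 - (lam1 + lam2 + mu / Real.sqrt A) / (1 + lam2)) ^ 2 * ‖x‖ ^ 2 ≤
        ∑' i, ⟪x, g i⟫ ^ 2 ∧
      (∑' i, ⟪x, g i⟫ ^ 2) ≤
        B * (1 + (lam1 + lam2 + mu / Real.sqrt B) / (1 - lam2)) ^ 2 * ‖x‖ ^ 2 := by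
  have hf : IsBesselSeq f B := fun x => ⟨(hframe x).1, (hframe x).2.2⟩
  have hg := hf.hasSynthesisBound.of_perturbation hlam1 hlam2lt hpert
  intro x
  refine ⟨(hg.isBesselSeq x).1, ?_, ?_⟩
  · obtain ⟨c, hc, hx, hcx⟩ := exists_hasSum_smul_of_perturbation hf hA (fun x => (hframe x).2.1)
      hg hlam2 hlam2lt.le hmu hmain hpert x
    have hconst : A * (1 - (lam1 + lam2 + mu / √A) / (1 + lam2)) ^ 2 =
        (√A * (1 - (lam1 + mu / √A)) / (1 + lam2)) ^ 2 := by
      rw [div_pow, mul_pow, Real.sq_sqrt hA.le]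
      field_simp
      ring
    rw [hconst]
    exact sq_mul_norm_sq_le_tsum_of_hasSum hc (hg.isBesselSeq x).1 hx
      (div_nonneg (mul_nonneg (Real.sqrt_nonneg A) (by linarith)) (by linarith)) hcx
  · have hconst : (((1 + lam1) * √B + mu) / (1 - lam2)) ^ 2 =
        B * (1 + (lam1 + lam2 + mu / √B) / (1 - lam2)) ^ 2 := by
      have : √B ≠ 0 := (Real.sqrt_pos.2 hB).ne'
      have : 1 - lam2 ≠ 0 := by linarith
      rw [← Real.sq_sqrt hB.le, ← mul_pow, Real.sq_sqrt hB.le]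
      field_simp
      ring
    exact hconst ▸ (hg.isBesselSeq x).2
end

section
/- Let X be a real Banach space, let U : X → X be a linear map, and let λ₁, λ₂ ∈ [0, 1). Assume that ‖x − U x‖ ≤ λ₁‖x‖ + λ₂‖U x‖ for all x ∈ X. Then U is bijective, and its inverse U⁻¹ satisfies ((1 − λ₂)/(1 + λ₁))·‖y‖ ≤ ‖U⁻¹ y‖ ≤ ((1 + λ₂)/(1 − λ₁))·‖y‖ for all y ∈ X. -/
/-!
Put `A t = 1 + t • (U - 1)`. The hypothesis gives every `A t` with `t ∈ [0, 1]` the same lower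
bound `c ‖x‖ ≤ ‖A t x‖`, with `c = (1 - max λ₁ λ₂) / 2`, so the inverses of the invertible `A t`
are uniformly bounded by `c⁻¹`. A Neumann series therefore carries invertibility from `A s` to
every `A t` with `|t - s| ‖U - 1‖ < c`, and finitely many such steps lead from `A 0 = 1` to
`A 1 = U` (the method of continuity). The bounds for `U⁻¹` are the hypothesis read at `x = U⁻¹ y`.
-/

open Function

section Vectors

variable {E : Type*} [SeminormedAddCommGroup E]

theorem one_sub_mul_norm_le_of_norm_sub_le {u v : E} {a b : ℝ}
    (h : ‖u - v‖ ≤ a * ‖u‖ + b * ‖v‖) : (1 - b) * ‖v‖ ≤ (1 + a) * ‖u‖ := by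
  have := norm_le_norm_add_norm_sub' v u
  rw [norm_sub_rev] at this
  linarith

theorem one_sub_max_mul_norm_le_two_mul_norm_add_smul_sub [NormedSpace ℝ E] {u v : E} {a b t : ℝ}
    (ha : 0 ≤ a) (ha' : a ≤ 1) (hb : 0 ≤ b) (hb' : b ≤ 1) (ht : t ∈ Set.Icc (0 : ℝ) 1)
    (h : ‖u - v‖ ≤ a * ‖u‖ + b * ‖v‖) :
    (1 - max a b) * ‖u‖ ≤ 2 * ‖u + t • (v - u)‖ := by
  obtain ⟨ht0, ht1⟩ := ht
  set w := u + t • (v - u)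
  set d := ‖u - v‖
  have hu : ‖u‖ ≤ ‖w‖ + t * d := by
    calc ‖u‖ = ‖w + t • (u - v)‖ := by congr 1; module
      _ ≤ ‖w‖ + t * d := by
        grw [norm_add_le, norm_smul, Real.norm_of_nonneg ht0]
  have hv : ‖v‖ ≤ ‖w‖ + (1 - t) * d := by
    calc ‖v‖ = ‖w - (1 - t) • (u - v)‖ := by congr 1; module
      _ ≤ ‖w‖ + (1 - t) * d := by
        grw [norm_sub_le, norm_smul, Real.norm_of_nonneg (sub_nonneg.2 ht1)]
  -- Feeding `hu` and `hv` back into `h` bounds `d` by a multiple of `‖w‖`.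
  have hd : (1 - (t * a + (1 - t) * b)) * d ≤ (a + b) * ‖w‖ := by
    have := mul_le_mul_of_nonneg_left hu ha
    have := mul_le_mul_of_nonneg_left hv hb
    linarith
  have hmax : t * a + (1 - t) * b ≤ max a b := by
    nlinarith [le_max_left a b, le_max_right a b]
  have hm : 0 ≤ 1 - max a b := sub_nonneg.2 (max_le ha' hb')
  have hd0 : 0 ≤ d := norm_nonneg _
  calc (1 - max a b) * ‖u‖ ≤ (1 - max a b) * (‖w‖ + d) := by
        gcongr; nlinarith
    _ ≤ (1 - max a b) * ‖w‖ + (a + b) * ‖w‖ := by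
        nlinarith [mul_le_mul_of_nonneg_right hmax hd0]
    _ ≤ 2 * ‖w‖ := by nlinarith [norm_nonneg w, le_max_left a b]

end Vectors

section MethodOfContinuity

variable {E : Type*} [NormedAddCommGroup E] [CompleteSpace E]

theorem ContinuousLinearMap.isUnit_of_norm_sub_lt {𝕜 : Type*} [NontriviallyNormedField 𝕜]
    [NormedSpace 𝕜 E] {A B : E →L[𝕜] E} {c : ℝ} (hc : 0 < c) (hA : IsUnit A)
    (hlow : ∀ x, c * ‖x‖ ≤ ‖A x‖) (hAB : ‖B - A‖ < c) : IsUnit B := by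
  obtain ⟨u, rfl⟩ := hA
  set T : E →L[𝕜] E := (u⁻¹ : (E →L[𝕜] E)ˣ) * (u - B)
  have hT : ‖T‖ < 1 := by
    refine lt_of_le_of_lt (ContinuousLinearMap.opNorm_le_bound _ (by positivity) fun x ↦ ?_)
      ((div_lt_one hc).2 hAB)
    have hinv := hlow (T x)
    rw [← mul_apply_eq_comp, ← mul_assoc, u.mul_inv, one_mul] at hinv
    rw [div_mul_eq_mul_div, le_div_iff₀ hc, norm_sub_rev, mul_comm]
    exact hinv.trans (ContinuousLinearMap.le_opNorm _ _)
  have hB : B = ↑u * (1 - T) := by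
    simp only [T, mul_sub, mul_one, ← mul_assoc, u.mul_inv, one_mul, sub_sub_cancel]
  rw [hB]
  exact u.isUnit.mul (isUnit_one_sub_of_norm_lt_one hT)

variable [NormedSpace ℝ E]

theorem ContinuousLinearMap.isUnit_of_segment_bounded_below {A B : E →L[ℝ] E} {c : ℝ}
    (hc : 0 < c) (hA : IsUnit A)
    (hlow : ∀ t ∈ Set.Icc (0 : ℝ) 1, ∀ x, c * ‖x‖ ≤ ‖(A + t • (B - A)) x‖) : IsUnit B := by
  obtain ⟨N, hN⟩ := exists_nat_gt (‖B - A‖ / c)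
  have hN0 : (0 : ℝ) < N := (div_nonneg (norm_nonneg _) hc.le).trans_lt hN
  have hstep : ‖B - A‖ / N < c := by
    rw [div_lt_iff₀ hc] at hN
    rw [div_lt_iff₀ hN0]
    linarith
  have hmem : ∀ m ≤ N, (m : ℝ) / N ∈ Set.Icc (0 : ℝ) 1 := fun m hm ↦
    ⟨by positivity, div_le_one_of_le₀ (by exact_mod_cast hm) hN0.le⟩
  have hunit : ∀ n ≤ N, IsUnit (A + ((n : ℝ) / N) • (B - A)) := by
    intro n
    induction n with
    | zero => simpa using hA
    | succ k ih =>
      intro hk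
      have hk' : k ≤ N := k.le_succ.trans hk
      refine isUnit_of_norm_sub_lt hc (ih hk') (hlow _ (hmem k hk')) ?_
      have hdiff : A + (((k + 1 : ℕ) : ℝ) / N) • (B - A) - (A + ((k : ℝ) / N) • (B - A))
          = (1 / (N : ℝ)) • (B - A) := by
        rw [add_sub_add_left_eq_sub, ← sub_smul]
        push_cast
        ring_nf
      rw [hdiff, norm_smul, Real.norm_of_nonneg (by positivity), one_div_mul_eq_div]
      exact hstep
  simpa [div_self hN0.ne'] using hunit N le_rfl

end MethodOfContinuity

/-- Casazza–Christensen / Kato perturbation lemma: invertibility of `U` and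
norm bounds for the inverse. -/
theorem perturbation_lemma_inverse_bounds
    {X : Type*} [NormedAddCommGroup X] [NormedSpace ℝ X] [CompleteSpace X]
    (U : X →ₗ[ℝ] X) (lam1 lam2 : ℝ)
    (hlam1 : 0 ≤ lam1) (hlam1' : lam1 < 1) (hlam2 : 0 ≤ lam2) (hlam2' : lam2 < 1)
    (h : ∀ x : X, ‖x - U x‖ ≤ lam1 * ‖x‖ + lam2 * ‖U x‖) :
    Function.Bijective U ∧
      ∀ y : X, (1 - lam2) / (1 + lam1) * ‖y‖ ≤ ‖Function.invFun U y‖ ∧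
        ‖Function.invFun U y‖ ≤ (1 + lam2) / (1 - lam1) * ‖y‖ := by
  have hbound : ∀ x, ‖U x‖ ≤ (1 + lam1) / (1 - lam2) * ‖x‖ := fun x ↦ by
    rw [div_mul_eq_mul_div, le_div_iff₀ (by linarith), mul_comm]
    exact one_sub_mul_norm_le_of_norm_sub_le (h x)
  have hunit : IsUnit (U.mkContinuous _ hbound) :=
    ContinuousLinearMap.isUnit_of_segment_bounded_below
      (c := (1 - max lam1 lam2) / 2) (by simp [hlam1', hlam2']) isUnit_one fun t ht x ↦ by
        have := one_sub_max_mul_norm_le_two_mul_norm_add_smul_sub hlam1 hlam1'.le hlam2 hlam2'.le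
          ht (h x)
        simp only [add_apply, smul_apply, sub_apply, one_apply_eq_self,
          LinearMap.mkContinuous_apply]
        linarith
  have hbij : Bijective U := ContinuousLinearMap.isUnit_iff_bijective.1 hunit
  refine ⟨hbij, fun y ↦ ?_⟩
  set x := invFun U y
  have hx : U x = y := invFun_eq (hbij.2 y)
  have hlower : (1 - lam2) * ‖y‖ ≤ (1 + lam1) * ‖x‖ :=
    hx ▸ one_sub_mul_norm_le_of_norm_sub_le (h x)
  have hupper : (1 - lam1) * ‖x‖ ≤ (1 + lam2) * ‖y‖ :=
    hx ▸ one_sub_mul_norm_le_of_norm_sub_le (by rw [norm_sub_rev, add_comm]; exact h x)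
  constructor
  · rw [div_mul_eq_mul_div, div_le_iff₀ (by linarith)]
    linarith
  · rw [div_mul_eq_mul_div, le_div_iff₀ (by linarith)]
    linarith
end

section
/- Let X be a real Banach space, let 1 < p < ∞ and let q = p/(p − 1) be its conjugate exponent. Let (g_i)_{i∈ℕ} be a sequence of continuous linear functionals on X and let B > 0. Assume that for every f ∈ X the family (‖g_i(f)‖^p)_{i∈ℕ} is summable and (∑_{i=1}^∞ |g_i(f)|^p)^{1/p} ≤ B‖f‖. Then for every d = (d_i)_{i∈ℕ} ∈ ℓ^q(ℕ), the family (d_i · g_i)_{i∈ℕ} is summable in the dual space X* (with respect to the operator norm), and ‖∑_{i=1}^∞ d_i g_i‖ ≤ B·(∑_{i=1}^∞ |d_i|^q)^{1/q}; in particular the synthesis operator T : ℓ^q(ℕ) → X*, T(d) = ∑_{i=1}^∞ d_i g_i, is a well-defined bounded linear operator with ‖T‖ ≤ B. -/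
/-! On a finite set `s` of indices, Hölder's inequality applied to `∑ d i * g i f` together with
the Bessel bound gives `‖∑ i ∈ s, d i • g i‖ ≤ B (∑ i ∈ s, |d i| ^ q) ^ (1 / q)`. The dual of `X`
is complete because `ℝ` is, so this estimate on finite blocks is a Cauchy criterion for the series
`∑ d i • g i`, and letting `s` exhaust `ℕ` gives the norm bound. The sum is linear in `d`, so on
`ℓ^q` it defines a bounded operator of norm at most `B`. -/

open Filter Topology

section Summability

variable {ι E : Type*} [NormedAddCommGroup E]

theorem summable_of_norm_sum_le_of_tendsto [CompleteSpace E] {f : ι → E} {a : ι → ℝ}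
    (ha : Summable a) {φ : ℝ → ℝ} (hφ : Tendsto φ (𝓝 0) (𝓝 0))
    (h : ∀ s : Finset ι, ‖∑ i ∈ s, f i‖ ≤ φ (∑ i ∈ s, a i)) : Summable f := by
  refine summable_iff_vanishing_norm.2 fun ε hε => ?_
  obtain ⟨δ, hδ, hφδ⟩ := Metric.tendsto_nhds_nhds.1 hφ ε hε
  obtain ⟨s, hs⟩ := summable_iff_vanishing_norm.1 ha δ hδ
  refine ⟨s, fun t ht => ?_⟩
  have hφt := hφδ (by simpa using hs t ht)
  rw [Real.dist_eq, sub_zero] at hφt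
  exact (h t).trans_lt ((le_abs_self _).trans_lt hφt)

theorem norm_tsum_le_of_norm_sum_le {f : ι → E} (hf : Summable f) {c : ℝ}
    (h : ∀ s : Finset ι, ‖∑ i ∈ s, f i‖ ≤ c) : ‖∑' i, f i‖ ≤ c :=
  le_of_tendsto' (continuous_norm.tendsto _ |>.comp hf.hasSum) h

end Summability

section Bessel

variable {ι X : Type*} [NormedAddCommGroup X] [NormedSpace ℝ X] {p q B : ℝ}

theorem rpow_sum_abs_le_of_bessel {g : ι → X →L[ℝ] ℝ} (hp : 0 < p)
    (hbessel : ∀ f : X, Summable (fun i => |g i f| ^ p) ∧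
      (∑' i, |g i f| ^ p) ^ (1 / p) ≤ B * ‖f‖) (f : X) (s : Finset ι) :
    (∑ i ∈ s, |g i f| ^ p) ^ (1 / p) ≤ B * ‖f‖ := by
  refine le_trans ?_ (hbessel f).2
  gcongr
  exact (hbessel f).1.sum_le_tsum s fun i _ => by positivity

theorem norm_sum_smul_le_of_bessel {g : ι → X →L[ℝ] ℝ} (hpq : p.HolderConjugate q)
    (hB : 0 ≤ B) (hbessel : ∀ (f : X) (s : Finset ι), (∑ i ∈ s, |g i f| ^ p) ^ (1 / p) ≤ B * ‖f‖)
    (d : ι → ℝ) (s : Finset ι) :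
    ‖∑ i ∈ s, d i • g i‖ ≤ B * (∑ i ∈ s, |d i| ^ q) ^ (1 / q) := by
  refine ContinuousLinearMap.opNorm_le_bound _ (by positivity) fun f => ?_
  calc ‖(∑ i ∈ s, d i • g i) f‖ = |∑ i ∈ s, g i f * d i| := by
        simp [mul_comm]
    _ ≤ ∑ i ∈ s, |g i f| * |d i| := by
        simpa only [abs_mul] using Finset.abs_sum_le_sum_abs (fun i => g i f * d i) s
    _ ≤ (∑ i ∈ s, |g i f| ^ p) ^ (1 / p) * (∑ i ∈ s, |d i| ^ q) ^ (1 / q) := by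
        simpa only [abs_abs] using Real.inner_le_Lp_mul_Lq s (fun i => |g i f|) (fun i => |d i|) hpq
    _ ≤ B * ‖f‖ * (∑ i ∈ s, |d i| ^ q) ^ (1 / q) := by
        gcongr
        exact hbessel f s
    _ = B * (∑ i ∈ s, |d i| ^ q) ^ (1 / q) * ‖f‖ := by ring

theorem summable_smul_of_bessel {g : ι → X →L[ℝ] ℝ} (hpq : p.HolderConjugate q)
    (hB : 0 ≤ B) (hbessel : ∀ (f : X) (s : Finset ι), (∑ i ∈ s, |g i f| ^ p) ^ (1 / p) ≤ B * ‖f‖)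
    {d : ι → ℝ} (hd : Summable fun i => |d i| ^ q) : Summable fun i => d i • g i := by
  have hφ : Tendsto (fun x : ℝ => B * x ^ (1 / q)) (𝓝 0) (𝓝 0) := by
    have hq : 0 < 1 / q := one_div_pos.2 hpq.symm.pos
    simpa only [Real.zero_rpow hq.ne', mul_zero] using
      ((Real.continuous_rpow_const hq.le).const_mul B).tendsto 0
  exact summable_of_norm_sum_le_of_tendsto hd hφ (norm_sum_smul_le_of_bessel hpq hB hbessel d)

theorem norm_tsum_smul_le_of_bessel {g : ι → X →L[ℝ] ℝ} (hpq : p.HolderConjugate q)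
    (hB : 0 ≤ B) (hbessel : ∀ (f : X) (s : Finset ι), (∑ i ∈ s, |g i f| ^ p) ^ (1 / p) ≤ B * ‖f‖)
    {d : ι → ℝ} (hd : Summable fun i => |d i| ^ q) :
    ‖∑' i, d i • g i‖ ≤ B * (∑' i, |d i| ^ q) ^ (1 / q) := by
  refine norm_tsum_le_of_norm_sum_le (summable_smul_of_bessel hpq hB hbessel hd) fun s => ?_
  refine (norm_sum_smul_le_of_bessel hpq hB hbessel d s).trans ?_
  gcongr
  · exact one_div_nonneg.2 hpq.symm.nonneg
  · exact hd.sum_le_tsum s fun i _ => by positivity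

end Bessel

section Synthesis

variable {ι E : Type*} [NormedAddCommGroup E] [NormedSpace ℝ E] {r : ENNReal}

theorem lp.hasSum_abs_rpow (hr : 0 < r.toReal) (d : lp (fun _ : ι => ℝ) r) :
    HasSum (fun i => |d i| ^ r.toReal) (‖d‖ ^ r.toReal) := by
  simpa only [Real.norm_eq_abs] using lp.hasSum_norm hr d

theorem lp.exists_continuousLinearMap_eq_tsum_smul [Fact (1 ≤ r)] (g : ι → E) {B : ℝ} (hB : 0 ≤ B)
    (hg : ∀ d : lp (fun _ : ι => ℝ) r, Summable fun i => d i • g i)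
    (hbound : ∀ d : lp (fun _ : ι => ℝ) r, ‖∑' i, d i • g i‖ ≤ B * ‖d‖) :
    ∃ T : lp (fun _ : ι => ℝ) r →L[ℝ] E, ‖T‖ ≤ B ∧ ∀ d, T d = ∑' i, d i • g i := by
  let T : lp (fun _ : ι => ℝ) r →ₗ[ℝ] E :=
    { toFun := fun d => ∑' i, d i • g i
      map_add' := fun d e => by
        simp only [lp.coeFn_add, Pi.add_apply, add_smul]
        exact (hg d).tsum_add (hg e)
      map_smul' := fun c d => by
        simp only [lp.coeFn_smul, Pi.smul_apply, smul_eq_mul, mul_smul, RingHom.id_apply]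
        exact (hg d).tsum_const_smul c }
  exact ⟨T.mkContinuous B hbound, LinearMap.mkContinuous_norm_le T hB hbound, fun d => rfl⟩

end Synthesis

theorem besselSequence_synthesis_bounded_general
    {X : Type*} [NormedAddCommGroup X] [NormedSpace ℝ X]
    (p q : ℝ) (hp : 1 < p) (hq : q = p / (p - 1))
    [Fact (1 ≤ ENNReal.ofReal q)]
    (g : ℕ → X →L[ℝ] ℝ) (B : ℝ) (hB : 0 < B)
    (hbessel : ∀ f : X, Summable (fun i => |g i f| ^ p) ∧
      (∑' i, |g i f| ^ p) ^ (1 / p) ≤ B * ‖f‖) :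
    (∀ d : ℕ → ℝ, Summable (fun i => |d i| ^ q) →
      Summable (fun i => d i • g i) ∧
        ‖∑' i, d i • g i‖ ≤ B * (∑' i, |d i| ^ q) ^ (1 / q)) ∧
    ∃ T : lp (fun _ : ℕ => ℝ) (ENNReal.ofReal q) →L[ℝ] (X →L[ℝ] ℝ),
      ‖T‖ ≤ B ∧ ∀ d : lp (fun _ : ℕ => ℝ) (ENNReal.ofReal q),
        T d = ∑' i, d i • g i := by
  have hpq : p.HolderConjugate q := (Real.holderConjugate_iff_eq_conjExponent hp).2 hq
  have hfinite := rpow_sum_abs_le_of_bessel hpq.pos hbessel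
  have hsynth : ∀ d : ℕ → ℝ, Summable (fun i => |d i| ^ q) →
      Summable (fun i => d i • g i) ∧ ‖∑' i, d i • g i‖ ≤ B * (∑' i, |d i| ^ q) ^ (1 / q) :=
    fun d hd => ⟨summable_smul_of_bessel hpq hB.le hfinite hd,
      norm_tsum_smul_le_of_bessel hpq hB.le hfinite hd⟩
  refine ⟨hsynth, ?_⟩
  have hq' : (ENNReal.ofReal q).toReal = q := ENNReal.toReal_ofReal hpq.symm.nonneg
  have hlp (d : lp (fun _ : ℕ => ℝ) (ENNReal.ofReal q)) :
      HasSum (fun i => |d i| ^ q) (‖d‖ ^ q) := by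
    simpa only [hq'] using lp.hasSum_abs_rpow (by rw [hq']; exact hpq.symm.pos) d
  refine lp.exists_continuousLinearMap_eq_tsum_smul g hB.le (fun d => (hsynth d (hlp d).summable).1) fun d => ?_
  calc ‖∑' i, d i • g i‖ ≤ B * (∑' i, |d i| ^ q) ^ (1 / q) := (hsynth d (hlp d).summable).2
    _ = B * ‖d‖ := by
      rw [(hlp d).tsum_eq, one_div, Real.rpow_rpow_inv (norm_nonneg d) hpq.symm.ne_zero]

/-- If `(g_i)` is an `ℓ^p`-Bessel sequence for `X` with bound `B`, then for every
`d ∈ ℓ^q` (with `q` the conjugate exponent) the series `∑ d_i g_i` converges in `X*`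
with norm at most `B‖d‖_q`; in particular the synthesis operator
`T : ℓ^q → X*` is well defined and bounded with `‖T‖ ≤ B`. -/
theorem besselSequence_synthesis_bounded
    {X : Type*} [NormedAddCommGroup X] [NormedSpace ℝ X] [CompleteSpace X]
    (p q : ℝ) (hp : 1 < p) (hq : q = p / (p - 1))
    [Fact (1 ≤ ENNReal.ofReal q)]
    (g : ℕ → X →L[ℝ] ℝ) (B : ℝ) (hB : 0 < B)
    (hbessel : ∀ f : X, Summable (fun i => |g i f| ^ p) ∧
      (∑' i, |g i f| ^ p) ^ (1 / p) ≤ B * ‖f‖) :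
    (∀ d : ℕ → ℝ, Summable (fun i => |d i| ^ q) →
      Summable (fun i => d i • g i) ∧
        ‖∑' i, d i • g i‖ ≤ B * (∑' i, |d i| ^ q) ^ (1 / q)) ∧
    ∃ T : lp (fun _ : ℕ => ℝ) (ENNReal.ofReal q) →L[ℝ] (X →L[ℝ] ℝ),
      ‖T‖ ≤ B ∧ ∀ d : lp (fun _ : ℕ => ℝ) (ENNReal.ofReal q),
        T d = ∑' i, d i • g i :=
  besselSequence_synthesis_bounded_general p q hp hq g B hB hbessel
end

section
/- Let X be a real Banach space, let 1 < p < ∞ and let q = p/(p − 1) be its conjugate exponent. Let (g_i)_{i∈ℕ} be a sequence of continuous linear functionals on X and let B > 0. Assume that for every d = (d_i)_{i∈ℕ} ∈ ℓ^q(ℕ) the family (d_i · g_i)_{i∈ℕ} is summable in the dual space X* (with respect to the operator norm) and ‖∑_{i=1}^∞ d_i g_i‖ ≤ B·(∑_{i=1}^∞ |d_i|^q)^{1/q}. Then for every f ∈ X the family (|g_i(f)|^p)_{i∈ℕ} is summable and (∑_{i=1}^∞ |g_i(f)|^p)^{1/p} ≤ B‖f‖; that is, (g_i) is an ℓ^p-Bessel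 sequence for X with bound B. -/
open Real

/-!
For a finite set `s` of indices, test the synthesis bound against the finitely supported
sequence `dᵢ = sign (gᵢ f) |gᵢ f|^(p-1)` (`i ∈ s`): then `∑ |dᵢ|^q` and `(∑ dᵢ gᵢ) f` both equal
`S = ∑_{i ∈ s} |gᵢ f|^p`, so `S ≤ B S^(1/q) ‖f‖`, i.e. `S^(1/p) ≤ B ‖f‖`. This uniform bound on
the partial sums gives both the summability and the bound on the series.
-/

lemma sign_mul_abs_rpow_sub_one_mul_self {p : ℝ} (hp : p ≠ 0) (x : ℝ) :
    (SignType.sign x : ℝ) * |x| ^ (p - 1) * x = |x| ^ p := by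
  rw [mul_right_comm, sign_mul_self]
  rcases eq_or_ne x 0 with rfl | hx
  · simp [zero_rpow hp]
  · rw [mul_comm, ← rpow_add_one (abs_ne_zero.2 hx), sub_add_cancel]

lemma abs_sign_mul_abs_rpow_sub_one_rpow {p q : ℝ} (hpq : (p - 1) * q = p) (hp : p ≠ 0)
    (x : ℝ) : |(SignType.sign x : ℝ) * |x| ^ (p - 1)| ^ q = |x| ^ p := by
  rcases eq_or_ne x 0 with rfl | hx
  · simp [zero_rpow hp, zero_rpow (right_ne_zero_of_mul (hpq ▸ hp))]
  have hsign : |(SignType.sign x : ℝ)| = 1 := by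
    rcases hx.lt_or_gt with hx | hx <;> simp [hx]
  rw [abs_mul, hsign, one_mul, abs_of_nonneg (by positivity), ← rpow_mul (abs_nonneg x), hpq]

lemma le_rpow_of_le_mul_rpow_one_div {p q S C : ℝ} (hpq : p.HolderConjugate q) (hS : 0 ≤ S)
    (hC : 0 ≤ C) (h : S ≤ C * S ^ (1 / q)) : S ≤ C ^ p := by
  rcases hS.eq_or_lt with rfl | hS
  · positivity
  have hroot : S ^ (1 / p) ≤ C := by
    refine le_of_mul_le_mul_right ?_ (rpow_pos_of_pos hS (1 / q))
    rwa [← rpow_add hS, hpq.one_div_add_one_div, div_one, rpow_one]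
  exact (rpow_inv_le_iff_of_pos hS.le hC hpq.pos).1 (one_div p ▸ hroot)

theorem sum_abs_apply_rpow_le_of_norm_sum_smul_le {ι X : Type*} [NormedAddCommGroup X]
    [NormedSpace ℝ X] {p q C : ℝ} (hpq : p.HolderConjugate q) (hC : 0 ≤ C)
    (g : ι → X →L[ℝ] ℝ) (s : Finset ι)
    (hs : ∀ d : ι → ℝ, ‖∑ i ∈ s, d i • g i‖ ≤ C * (∑ i ∈ s, |d i| ^ q) ^ (1 / q)) (f : X) :
    ∑ i ∈ s, |g i f| ^ p ≤ (C * ‖f‖) ^ p := by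
  set d : ι → ℝ := fun i => SignType.sign (g i f) * |g i f| ^ (p - 1)
  have hd_rpow : ∑ i ∈ s, |d i| ^ q = ∑ i ∈ s, |g i f| ^ p :=
    Finset.sum_congr rfl fun i _ =>
      abs_sign_mul_abs_rpow_sub_one_rpow hpq.sub_one_mul_conj hpq.ne_zero _
  have hd_apply : (∑ i ∈ s, d i • g i) f = ∑ i ∈ s, |g i f| ^ p := by
    simp only [sum_apply, smul_apply, smul_eq_mul, d,
      sign_mul_abs_rpow_sub_one_mul_self hpq.ne_zero]
  refine le_rpow_of_le_mul_rpow_one_div hpq (by positivity) (by positivity) ?_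
  calc ∑ i ∈ s, |g i f| ^ p = (∑ i ∈ s, d i • g i) f := hd_apply.symm
    _ ≤ ‖∑ i ∈ s, d i • g i‖ * ‖f‖ := (le_norm_self _).trans (ContinuousLinearMap.le_opNorm _ f)
    _ ≤ C * (∑ i ∈ s, |d i| ^ q) ^ (1 / q) * ‖f‖ := by gcongr; exact hs d
    _ = C * ‖f‖ * (∑ i ∈ s, |g i f| ^ p) ^ (1 / q) := by rw [hd_rpow]; ring

theorem norm_sum_smul_le_of_norm_tsum_smul_le {ι E : Type*} [NormedAddCommGroup E]
    [NormedSpace ℝ E] {q B : ℝ} (hq : q ≠ 0) {g : ι → E}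
    (hsynth : ∀ d : ι → ℝ, Summable (fun i => |d i| ^ q) →
      ‖∑' i, d i • g i‖ ≤ B * (∑' i, |d i| ^ q) ^ (1 / q))
    (s : Finset ι) (d : ι → ℝ) :
    ‖∑ i ∈ s, d i • g i‖ ≤ B * (∑ i ∈ s, |d i| ^ q) ^ (1 / q) := by
  classical
  set d' : ι → ℝ := fun i => if i ∈ s then d i else 0
  have hd'_zero : ∀ i ∉ s, |d' i| ^ q = 0 := fun i hi => by simp [d', hi, zero_rpow hq]
  have hsmul : ∑' i, d' i • g i = ∑ i ∈ s, d i • g i := by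
    rw [tsum_eq_sum (s := s) fun i hi => by simp [d', hi]]
    exact Finset.sum_congr rfl fun i hi => by simp [d', hi]
  have hrpow : ∑' i, |d' i| ^ q = ∑ i ∈ s, |d i| ^ q := by
    rw [tsum_eq_sum hd'_zero]
    exact Finset.sum_congr rfl fun i hi => by simp [d', hi]
  simpa only [hsmul, hrpow] using hsynth d' (summable_of_ne_finset_zero hd'_zero)

theorem synthesis_bounded_implies_besselSequence_general
    {X : Type*} [NormedAddCommGroup X] [NormedSpace ℝ X]
    (p q : ℝ) (hp : 1 < p) (hq : q = p / (p - 1))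
    (g : ℕ → X →L[ℝ] ℝ) (B : ℝ) (hB : 0 < B)
    (hsynth : ∀ d : ℕ → ℝ, Summable (fun i => |d i| ^ q) →
      Summable (fun i => d i • g i) ∧
        ‖∑' i, d i • g i‖ ≤ B * (∑' i, |d i| ^ q) ^ (1 / q)) :
    ∀ f : X, Summable (fun i => |g i f| ^ p) ∧
      (∑' i, |g i f| ^ p) ^ (1 / p) ≤ B * ‖f‖ := by
  intro f
  have hpq : p.HolderConjugate q := (holderConjugate_iff_eq_conjExponent hp).2 hq
  have hfinite (s : Finset ℕ) : ∑ i ∈ s, |g i f| ^ p ≤ (B * ‖f‖) ^ p :=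
    sum_abs_apply_rpow_le_of_norm_sum_smul_le hpq hB.le g s
      (norm_sum_smul_le_of_norm_tsum_smul_le hpq.symm.ne_zero (fun d hd => (hsynth d hd).2) s) f
  have hsummable : Summable fun i => |g i f| ^ p :=
    summable_of_sum_le (fun i => by positivity) hfinite
  refine ⟨hsummable, ?_⟩
  rw [one_div, rpow_inv_le_iff_of_pos (tsum_nonneg fun i => by positivity) (by positivity) hpq.pos]
  exact hsummable.tsum_le_of_sum_le hfinite

/-- If the synthesis map `d ↦ ∑ d_i g_i` from `ℓ^q` into `X*` is well defined and
bounded by `B` (with `q` the conjugate exponent of `p`), then `(g_i)` is an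
`ℓ^p`-Bessel sequence for `X` with bound `B`. -/
theorem synthesis_bounded_implies_besselSequence
    {X : Type*} [NormedAddCommGroup X] [NormedSpace ℝ X] [CompleteSpace X]
    (p q : ℝ) (hp : 1 < p) (hq : q = p / (p - 1))
    (g : ℕ → X →L[ℝ] ℝ) (B : ℝ) (hB : 0 < B)
    (hsynth : ∀ d : ℕ → ℝ, Summable (fun i => |d i| ^ q) →
      Summable (fun i => d i • g i) ∧
        ‖∑' i, d i • g i‖ ≤ B * (∑' i, |d i| ^ q) ^ (1 / q)) :
    ∀ f : X, Summable (fun i => |g i f| ^ p) ∧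
      (∑' i, |g i f| ^ p) ^ (1 / p) ≤ B * ‖f‖ :=
  synthesis_bounded_implies_besselSequence_general p q hp hq g B hB hsynth
end

section
/- Let X and Θ be real normed spaces, let G, H : X → Θ be maps, and let A, B, λ > 0. Assume: (i) A‖f‖ ≤ ‖G f‖ ≤ B‖f‖ for all f ∈ X; (ii) ‖G f − H f‖ ≤ λ·min(‖G f‖, ‖H f‖) for all f ∈ X; (iii) there is a continuous map S : Θ → X with S(G f) = f for all f ∈ X; and (iv) there is a continuous linear map D : Θ → Θ with D(H f) = G f for all f ∈ X. Then (A/(1 + λ))·‖f‖ ≤ ‖H f‖ ≤ (1 + λ)·B·‖f‖ for all f ∈ X, and the continuous map V := S ∘ D satisfies V(H f) = f for all f ∈ X. -/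
/-! Both frame inequalities for `H` come from the triangle inequality alone: the perturbation
condition bounds `‖G f - H f‖` by `λ‖H f‖` and by `λ‖G f‖`, so each of `‖G f‖`, `‖H f‖` is at
most `(1 + λ)` times the other. Reconstruction is immediate, since `S (D (H f)) = S (G f) = f`. -/

section NormComparison

variable {E : Type*} [SeminormedAddGroup E] {u v : E} {c : ℝ}

theorem norm_le_one_add_mul_norm_of_norm_sub_le (h : ‖u - v‖ ≤ c * ‖u‖) :
    ‖v‖ ≤ (1 + c) * ‖u‖ := by
  linarith [norm_le_norm_add_norm_sub u v]

theorem norm_le_one_add_mul_norm_of_norm_sub_le_mul_min (hc : 0 ≤ c)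
    (h : ‖u - v‖ ≤ c * min ‖u‖ ‖v‖) :
    ‖u‖ ≤ (1 + c) * ‖v‖ ∧ ‖v‖ ≤ (1 + c) * ‖u‖ := by
  have hu : ‖u - v‖ ≤ c * ‖u‖ := h.trans (mul_le_mul_of_nonneg_left (min_le_left _ _) hc)
  have hv : ‖v - u‖ ≤ c * ‖v‖ := by
    rw [norm_sub_rev]
    exact h.trans (mul_le_mul_of_nonneg_left (min_le_right _ _) hc)
  exact ⟨norm_le_one_add_mul_norm_of_norm_sub_le hv, norm_le_one_add_mul_norm_of_norm_sub_le hu⟩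

end NormComparison

theorem frame_stability_sufficient_general
    {X Θ : Type*} [NormedAddCommGroup X] [NormedSpace ℝ X]
    [NormedAddCommGroup Θ] [NormedSpace ℝ Θ]
    (G H : X → Θ) (S : Θ → X) (D : Θ →L[ℝ] Θ) (A B lam : ℝ)
    (hlam : 0 < lam)
    (hG : ∀ f : X, A * ‖f‖ ≤ ‖G f‖ ∧ ‖G f‖ ≤ B * ‖f‖)
    (hpert : ∀ f : X, ‖G f - H f‖ ≤ lam * min ‖G f‖ ‖H f‖)
    (hScont : Continuous S) (hS : ∀ f : X, S (G f) = f)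
    (hD : ∀ f : X, D (H f) = G f) :
    (∀ f : X, A / (1 + lam) * ‖f‖ ≤ ‖H f‖ ∧ ‖H f‖ ≤ (1 + lam) * B * ‖f‖) ∧
    Continuous (S ∘ D) ∧ ∀ f : X, (S ∘ D) (H f) = f := by
  refine ⟨fun f => ?_, hScont.comp D.continuous, fun f => by simp [hD, hS]⟩
  obtain ⟨hGlower, hGupper⟩ := hG f
  obtain ⟨hGH, hHG⟩ := norm_le_one_add_mul_norm_of_norm_sub_le_mul_min hlam.le (hpert f)
  have hlam₁ : 0 < 1 + lam := by linarith
  constructor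
  · rw [div_mul_eq_mul_div, div_le_iff₀ hlam₁]
    linarith
  · calc ‖H f‖ ≤ (1 + lam) * ‖G f‖ := hHG
      _ ≤ (1 + lam) * (B * ‖f‖) := mul_le_mul_of_nonneg_left hGupper hlam₁.le
      _ = (1 + lam) * B * ‖f‖ := (mul_assoc _ _ _).symm

/-- Sufficiency direction of the stability theorem (single-seminorm instance):
if `G` is the analysis map of a frame with bounds `A, B` and reconstruction `S`,
and `H` satisfies the perturbation condition `‖Gf - Hf‖ ≤ λ·min(‖Gf‖, ‖Hf‖)` with
an intertwining operator `D`, then `H` satisfies the frame inequalities with bounds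
`A/(1+λ)` and `(1+λ)B`, and `V := S ∘ D` reconstructs from `H`. -/
theorem frame_stability_sufficient
    {X Θ : Type*} [NormedAddCommGroup X] [NormedSpace ℝ X]
    [NormedAddCommGroup Θ] [NormedSpace ℝ Θ]
    (G H : X → Θ) (S : Θ → X) (D : Θ →L[ℝ] Θ) (A B lam : ℝ)
    (hA : 0 < A) (hB : 0 < B) (hlam : 0 < lam)
    (hG : ∀ f : X, A * ‖f‖ ≤ ‖G f‖ ∧ ‖G f‖ ≤ B * ‖f‖)
    (hpert : ∀ f : X, ‖G f - H f‖ ≤ lam * min ‖G f‖ ‖H f‖)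
    (hScont : Continuous S) (hS : ∀ f : X, S (G f) = f)
    (hD : ∀ f : X, D (H f) = G f) :
    (∀ f : X, A / (1 + lam) * ‖f‖ ≤ ‖H f‖ ∧ ‖H f‖ ≤ (1 + lam) * B * ‖f‖) ∧
    Continuous (S ∘ D) ∧ ∀ f : X, (S ∘ D) (H f) = f :=
  frame_stability_sufficient_general G H S D A B lam hlam hG hpert hScont hS hD
end

section
/- Let X and Θ be real normed spaces, let G, H : X → Θ be maps, and let A, B, A', B' > 0. Assume that A‖f‖ ≤ ‖G f‖ ≤ B‖f‖ and A'‖f‖ ≤ ‖H f‖ ≤ B'‖f‖ for all f ∈ X. Then, with λ := max(1 + B'/A, 1 + B/A'), one has ‖G f − H f‖ ≤ λ·min(‖G f‖, ‖H f‖) for all f ∈ X. -/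
lemma le_div_mul_of_le_mul_of_mul_le {a b t A B : ℝ} (hA : 0 < A) (hB : 0 ≤ B)
    (ha : A * t ≤ a) (hb : b ≤ B * t) : b ≤ B / A * a :=
  calc b ≤ B * t := hb
    _ = B / A * (A * t) := by field_simp
    _ ≤ B / A * a := by gcongr

lemma add_le_max_mul_min {a b c d : ℝ} (ha : 0 ≤ a) (hb : 0 ≤ b)
    (hba : b ≤ c * a) (hab : a ≤ d * b) : a + b ≤ max (1 + c) (1 + d) * min a b := by
  rcases le_total a b with h | h
  · calc a + b ≤ (1 + c) * a := by linarith
      _ ≤ max (1 + c) (1 + d) * min a b := by rw [min_eq_left h]; gcongr; exact le_max_left _ _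
  · calc a + b ≤ (1 + d) * b := by linarith
      _ ≤ max (1 + c) (1 + d) * min a b := by rw [min_eq_right h]; gcongr; exact le_max_right _ _

/-- Necessity direction of the stability theorem (single-seminorm instance):
two analysis maps `G`, `H` satisfying frame inequalities with bounds `A, B` and
`A', B'` respectively automatically satisfy the perturbation condition with
`λ = max(1 + B'/A, 1 + B/A')`. -/
theorem frame_stability_necessary
    {X Θ : Type*} [NormedAddCommGroup X] [NormedSpace ℝ X]
    [NormedAddCommGroup Θ] [NormedSpace ℝ Θ]
    (G H : X → Θ) (A B A' B' : ℝ)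
    (hA : 0 < A) (hB : 0 < B) (hA' : 0 < A') (hB' : 0 < B')
    (hG : ∀ f : X, A * ‖f‖ ≤ ‖G f‖ ∧ ‖G f‖ ≤ B * ‖f‖)
    (hH : ∀ f : X, A' * ‖f‖ ≤ ‖H f‖ ∧ ‖H f‖ ≤ B' * ‖f‖) :
    ∀ f : X, ‖G f - H f‖ ≤ max (1 + B' / A) (1 + B / A') * min ‖G f‖ ‖H f‖ := by
  intro f
  obtain ⟨hG_lower, hG_upper⟩ := hG f
  obtain ⟨hH_lower, hH_upper⟩ := hH f
  have hHG : ‖H f‖ ≤ B' / A * ‖G f‖ :=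
    le_div_mul_of_le_mul_of_mul_le hA hB'.le hG_lower hH_upper
  have hGH : ‖G f‖ ≤ B / A' * ‖H f‖ :=
    le_div_mul_of_le_mul_of_mul_le hA' hB.le hH_lower hG_upper
  exact (norm_sub_le _ _).trans (add_le_max_mul_min (norm_nonneg _) (norm_nonneg _) hHG hGH)
end

section
/- Let X be a nontrivial real Banach space, let 1 ≤ p < ∞, and let (g_n)_{n∈ℕ}, (h_n)_{n∈ℕ} be sequences of continuous linear functionals on X. Assume: (i) for every f ∈ X the sequence (g_n(f))_n lies in ℓ^p(ℕ) with (∑_n |g_n(f)|^p)^{1/p} ≤ B‖f‖ for some B > 0; (ii) there is a bounded linear operator S : ℓ^p(ℕ) → X with S((g_n(f))_n) = f for all f ∈ X; (iii) for every f ∈ X the sequence (h_n(f))_n lies in ℓ^p(ℕ); (iv) (α_n)_n and (β_n)_n are sequences of positive reals with 0 < a ≤ α_n ≤ a' and 0 < b ≤ β_n ≤ b' for all n; (v) λ, μ ∈ [0, 1) and γ ≥ 0 satisfy ‖S‖·γ < (1 − λ)·a; and (vi) for every f ∈ X, (∑_n |α_n g_n(f) − β_n h_n(f)|^p)^{1/p}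 ≤ λ·(∑_n |α_n g_n(f)|^p)^{1/p} + μ·(∑_n |β_n h_n(f)|^p)^{1/p} + γ‖f‖. Then for every f ∈ X one has (((1 − λ)·‖S‖⁻¹·a − γ)/((1 + μ)·b'))·‖f‖ ≤ (∑_n |h_n(f)|^p)^{1/p} ≤ (((1 + λ)·B·a' + γ)/((1 − μ)·b))·‖f‖. -/
/-!
Write `‖x‖_p = (∑ |xₙ|^p)^(1/p)`, `u = (αₙ gₙ f)`, `v = (βₙ hₙ f)`. Minkowski's inequality gives
`‖u‖_p ≤ ‖v‖_p + ‖u - v‖_p` and `‖v‖_p ≤ ‖u‖_p + ‖u - v‖_p`; feeding the perturbation hypothesis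
into the right-hand sides yields `(1 - λ)‖u‖_p ≤ (1 + μ)‖v‖_p + γ‖f‖` and
`(1 - μ)‖v‖_p ≤ (1 + λ)‖u‖_p + γ‖f‖`. The weights compare `‖u‖_p`, `‖v‖_p` with `‖(gₙ f)‖_p`,
`‖(hₙ f)‖_p`, and the frame bounds for `g` are `‖S‖⁻¹‖f‖ ≤ ‖(gₙ f)‖_p ≤ B‖f‖`
(the lower one trivially when `‖S‖ = 0`, as then `‖S‖⁻¹ = 0`).
-/

noncomputable def seqLpNorm (p : ℝ) (x : ℕ → ℝ) : ℝ :=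
  (∑' n, |x n| ^ p) ^ (1 / p)

section SeqLpNorm

variable {p c : ℝ} {x y : ℕ → ℝ}

lemma seqLpNorm_nonneg : 0 ≤ seqLpNorm p x :=
  Real.rpow_nonneg (tsum_nonneg fun _ => Real.rpow_nonneg (abs_nonneg _) _) _

lemma Summable.abs_rpow_of_abs_le_mul (hp : 0 ≤ p) (hc : 0 ≤ c)
    (hy : Summable fun n => |y n| ^ p) (hle : ∀ n, |x n| ≤ c * |y n|) :
    Summable fun n => |x n| ^ p :=
  (hy.mul_left (c ^ p)).of_nonneg_of_le (fun _ => Real.rpow_nonneg (abs_nonneg _) _) fun n => by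
    rw [← Real.mul_rpow hc (abs_nonneg _)]
    exact Real.rpow_le_rpow (abs_nonneg _) (hle n) hp

lemma seqLpNorm_mono (hp : 0 < p) (hy : Summable fun n => |y n| ^ p)
    (hle : ∀ n, |x n| ≤ |y n|) : seqLpNorm p x ≤ seqLpNorm p y := by
  have hx : Summable fun n => |x n| ^ p :=
    hy.abs_rpow_of_abs_le_mul hp.le zero_le_one fun n => (hle n).trans_eq (one_mul _).symm
  refine Real.rpow_le_rpow (tsum_nonneg fun _ => Real.rpow_nonneg (abs_nonneg _) _)
    (hx.tsum_le_tsum (fun n => Real.rpow_le_rpow (abs_nonneg _) (hle n) hp.le) hy) (by positivity)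

lemma seqLpNorm_const_mul (hp : 0 < p) (c : ℝ) (x : ℕ → ℝ) :
    seqLpNorm p (fun n => c * x n) = |c| * seqLpNorm p x := by
  simp only [seqLpNorm, abs_mul, Real.mul_rpow (abs_nonneg c) (abs_nonneg _), tsum_mul_left]
  rw [Real.mul_rpow (Real.rpow_nonneg (abs_nonneg c) _)
      (tsum_nonneg fun _ => Real.rpow_nonneg (abs_nonneg _) _),
    ← Real.rpow_mul (abs_nonneg c), mul_one_div_cancel hp.ne', Real.rpow_one]

lemma seqLpNorm_le_mul_of_abs_le_mul (hp : 0 < p) (hc : 0 ≤ c)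
    (hy : Summable fun n => |y n| ^ p) (hle : ∀ n, |x n| ≤ c * |y n|) :
    seqLpNorm p x ≤ c * seqLpNorm p y := by
  rw [← abs_of_nonneg hc, ← seqLpNorm_const_mul hp]
  have hcy : Summable fun n => |c * y n| ^ p :=
    hy.abs_rpow_of_abs_le_mul hp.le (abs_nonneg c) fun n => (abs_mul c (y n)).le
  exact seqLpNorm_mono hp hcy fun n => by rw [abs_mul, abs_of_nonneg hc]; exact hle n

lemma mul_seqLpNorm_le_of_mul_abs_le (hp : 0 < p) (hc : 0 ≤ c)
    (hy : Summable fun n => |y n| ^ p) (hle : ∀ n, c * |x n| ≤ |y n|) :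
    c * seqLpNorm p x ≤ seqLpNorm p y := by
  rw [← abs_of_nonneg hc, ← seqLpNorm_const_mul hp]
  exact seqLpNorm_mono hp hy fun n => by rw [abs_mul, abs_of_nonneg hc]; exact hle n

lemma Summable.abs_rpow_add (hp : 1 ≤ p) (hx : Summable fun n => |x n| ^ p)
    (hy : Summable fun n => |y n| ^ p) : Summable fun n => |x n + y n| ^ p := by
  have hsum := (Real.Lp_add_le_tsum_of_nonneg (f := fun n => |x n|) (g := fun n => |y n|) hp
    (fun n => abs_nonneg (x n)) (fun n => abs_nonneg (y n)) hx hy).1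
  have habs : ∀ n, |(|x n| + |y n|)| = |x n| + |y n| := fun n =>
    abs_of_nonneg (add_nonneg (abs_nonneg _) (abs_nonneg _))
  exact Summable.abs_rpow_of_abs_le_mul (y := fun n => |x n| + |y n|) (zero_le_one.trans hp)
    zero_le_one (by simpa only [habs] using hsum) fun n => by
      rw [one_mul, habs]; exact abs_add_le _ _

lemma seqLpNorm_add_le (hp : 1 ≤ p) (hx : Summable fun n => |x n| ^ p)
    (hy : Summable fun n => |y n| ^ p) :
    seqLpNorm p (fun n => x n + y n) ≤ seqLpNorm p x + seqLpNorm p y := by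
  obtain ⟨hsum, hle⟩ := Real.Lp_add_le_tsum_of_nonneg (f := fun n => |x n|)
    (g := fun n => |y n|) hp (fun n => abs_nonneg (x n)) (fun n => abs_nonneg (y n)) hx hy
  have habs : ∀ n, |(|x n| + |y n|)| = |x n| + |y n| := fun n =>
    abs_of_nonneg (add_nonneg (abs_nonneg _) (abs_nonneg _))
  calc seqLpNorm p (fun n => x n + y n) ≤ seqLpNorm p (fun n => |x n| + |y n|) :=
        seqLpNorm_mono (zero_lt_one.trans_le hp) (by simpa only [habs] using hsum)
          fun n => (habs n).symm ▸ abs_add_le _ _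
    _ ≤ seqLpNorm p x + seqLpNorm p y := by simpa only [seqLpNorm, habs] using hle

lemma seqLpNorm_sub_comm :
    seqLpNorm p (fun n => x n - y n) = seqLpNorm p (fun n => y n - x n) := by
  simp only [seqLpNorm, abs_sub_comm (x _)]

lemma seqLpNorm_le_add_sub (hp : 1 ≤ p) (hx : Summable fun n => |x n| ^ p)
    (hy : Summable fun n => |y n| ^ p) :
    seqLpNorm p x ≤ seqLpNorm p y + seqLpNorm p (fun n => x n - y n) := by
  have hxy : Summable fun n => |x n - y n| ^ p := by
    have hy' : Summable fun n => |-y n| ^ p := by simpa only [abs_neg] using hy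
    simpa only [sub_eq_add_neg] using hx.abs_rpow_add hp hy'
  simpa only [add_sub_cancel] using seqLpNorm_add_le hp hy hxy

lemma seqLpNorm_perturbation {lam mu : ℝ} (hp : 1 ≤ p) (hx : Summable fun n => |x n| ^ p)
    (hy : Summable fun n => |y n| ^ p)
    (hxy : seqLpNorm p (fun n => x n - y n) ≤ lam * seqLpNorm p x + mu * seqLpNorm p y + c) :
    (1 - lam) * seqLpNorm p x ≤ (1 + mu) * seqLpNorm p y + c ∧
      (1 - mu) * seqLpNorm p y ≤ (1 + lam) * seqLpNorm p x + c := by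
  have hx_le := seqLpNorm_le_add_sub hp hx hy
  have hy_le := seqLpNorm_le_add_sub hp hy hx
  rw [← seqLpNorm_sub_comm] at hy_le
  constructor <;> linarith

lemma seqLpNorm_weighted_bounds {w : ℕ → ℝ} {a a' : ℝ} (hp : 0 < p) (ha : 0 ≤ a)
    (hw : ∀ n, a ≤ w n ∧ w n ≤ a') (hx : Summable fun n => |x n| ^ p) :
    Summable (fun n => |w n * x n| ^ p) ∧ a * seqLpNorm p x ≤ seqLpNorm p (fun n => w n * x n) ∧
      seqLpNorm p (fun n => w n * x n) ≤ a' * seqLpNorm p x := by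
  have ha' : 0 ≤ a' := ha.trans ((hw 0).1.trans (hw 0).2)
  have habs : ∀ n, |w n * x n| = w n * |x n| := fun n => by
    rw [abs_mul, abs_of_nonneg (ha.trans (hw n).1)]
  have hle : ∀ n, |w n * x n| ≤ a' * |x n| := fun n => by
    rw [habs]; exact mul_le_mul_of_nonneg_right (hw n).2 (abs_nonneg _)
  have hwx := hx.abs_rpow_of_abs_le_mul hp.le ha' hle
  refine ⟨hwx, mul_seqLpNorm_le_of_mul_abs_le hp ha hwx fun n => ?_,
    seqLpNorm_le_mul_of_abs_le_mul hp ha' hx hle⟩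
  rw [habs]; exact mul_le_mul_of_nonneg_right (hw n).1 (abs_nonneg _)

end SeqLpNorm

lemma norm_lp_mk_eq_seqLpNorm {p : ℝ} [Fact (1 ≤ ENNReal.ofReal p)] (hp : 0 < p) {x : ℕ → ℝ}
    (hx : Memℓp x (ENNReal.ofReal p)) :
    ‖(⟨x, hx⟩ : lp (fun _ : ℕ => ℝ) (ENNReal.ofReal p))‖ = seqLpNorm p x := by
  rw [lp.norm_eq_tsum_rpow (by rwa [ENNReal.toReal_ofReal hp.le])]
  simp [seqLpNorm, ENNReal.toReal_ofReal hp.le, Real.norm_eq_abs]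

theorem weighted_frame_perturbation_general
    {X : Type*} [NormedAddCommGroup X] [NormedSpace ℝ X]
    (p : ℝ) (hp : 1 ≤ p) [Fact (1 ≤ ENNReal.ofReal p)]
    (g h : ℕ → X →L[ℝ] ℝ) (B : ℝ)
    (hg : ∀ f : X, Summable (fun n => |g n f| ^ p) ∧
      (∑' n, |g n f| ^ p) ^ (1 / p) ≤ B * ‖f‖)
    (hgmem : ∀ f : X, Memℓp (fun n => g n f) (ENNReal.ofReal p))
    (S : lp (fun _ : ℕ => ℝ) (ENNReal.ofReal p) →L[ℝ] X)
    (hS : ∀ f : X, S ⟨fun n => g n f, hgmem f⟩ = f)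
    (hh : ∀ f : X, Summable (fun n => |h n f| ^ p))
    (α β : ℕ → ℝ) (a a' b b' : ℝ) (ha : 0 < a) (hb : 0 < b)
    (hα : ∀ n, a ≤ α n ∧ α n ≤ a') (hβ : ∀ n, b ≤ β n ∧ β n ≤ b')
    (lam mu γ : ℝ) (hlam : 0 ≤ lam) (hlam1 : lam < 1)
    (hmu : 0 ≤ mu) (hmu1 : mu < 1)
    (hpert : ∀ f : X,
      (∑' n, |α n * g n f - β n * h n f| ^ p) ^ (1 / p) ≤
        lam * (∑' n, |α n * g n f| ^ p) ^ (1 / p) +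
        mu * (∑' n, |β n * h n f| ^ p) ^ (1 / p) + γ * ‖f‖) :
    ∀ f : X,
      ((1 - lam) * ‖S‖⁻¹ * a - γ) / ((1 + mu) * b') * ‖f‖ ≤
        (∑' n, |h n f| ^ p) ^ (1 / p) ∧
      (∑' n, |h n f| ^ p) ^ (1 / p) ≤ ((1 + lam) * B * a' + γ) / ((1 - mu) * b) * ‖f‖ := by
  intro f
  have hp0 : 0 < p := by linarith
  have ha' : 0 ≤ a' := ha.le.trans ((hα 0).1.trans (hα 0).2)
  have hb' : 0 < b' := hb.trans_le ((hβ 0).1.trans (hβ 0).2)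
  obtain ⟨hu, hau, hua'⟩ := seqLpNorm_weighted_bounds hp0 ha.le hα (hg f).1
  obtain ⟨hv, hbv, hvb'⟩ := seqLpNorm_weighted_bounds hp0 hb.le hβ (hh f)
  obtain ⟨hlow, hup⟩ := seqLpNorm_perturbation hp hu hv (hpert f)
  have hgB : seqLpNorm p (fun n => g n f) ≤ B * ‖f‖ := (hg f).2
  have hSg : ‖S‖⁻¹ * ‖f‖ ≤ seqLpNorm p (fun n => g n f) := by
    refine inv_mul_le_of_le_mul₀ (norm_nonneg S) seqLpNorm_nonneg ?_
    calc ‖f‖ = ‖S ⟨fun n => g n f, hgmem f⟩‖ := by rw [hS f]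
      _ ≤ ‖S‖ * seqLpNorm p (fun n => g n f) :=
        (S.le_opNorm _).trans_eq (by rw [norm_lp_mk_eq_seqLpNorm hp0])
  show _ ≤ seqLpNorm p (fun n => h n f) ∧ seqLpNorm p (fun n => h n f) ≤ _
  constructor
  · rw [div_mul_eq_mul_div, div_le_iff₀ (by positivity)]
    nlinarith [mul_le_mul_of_nonneg_left hSg (mul_nonneg (sub_nonneg.2 hlam1.le) ha.le)]
  · rw [div_mul_eq_mul_div, le_div_iff₀ (by nlinarith)]
    nlinarith [mul_le_mul_of_nonneg_left hgB (mul_nonneg (by linarith : (0 : ℝ) ≤ 1 + lam) ha')]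

/-- Weighted perturbation theorem for Banach frames (single-seminorm instance of
the Fréchet frame theorem): the perturbed family `(h_n)` satisfies the frame
inequalities with the stated bounds. -/
theorem weighted_frame_perturbation
    {X : Type*} [NormedAddCommGroup X] [NormedSpace ℝ X] [CompleteSpace X]
    [Nontrivial X]
    (p : ℝ) (hp : 1 ≤ p) [Fact (1 ≤ ENNReal.ofReal p)]
    (g h : ℕ → X →L[ℝ] ℝ) (B : ℝ) (hB : 0 < B)
    (hg : ∀ f : X, Summable (fun n => |g n f| ^ p) ∧
      (∑' n, |g n f| ^ p) ^ (1 / p) ≤ B * ‖f‖)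
    (hgmem : ∀ f : X, Memℓp (fun n => g n f) (ENNReal.ofReal p))
    (S : lp (fun _ : ℕ => ℝ) (ENNReal.ofReal p) →L[ℝ] X)
    (hS : ∀ f : X, S ⟨fun n => g n f, hgmem f⟩ = f)
    (hh : ∀ f : X, Summable (fun n => |h n f| ^ p))
    (α β : ℕ → ℝ) (a a' b b' : ℝ) (ha : 0 < a) (hb : 0 < b)
    (hα : ∀ n, a ≤ α n ∧ α n ≤ a') (hβ : ∀ n, b ≤ β n ∧ β n ≤ b')
    (lam mu γ : ℝ) (hlam : 0 ≤ lam) (hlam1 : lam < 1)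
    (hmu : 0 ≤ mu) (hmu1 : mu < 1) (hγ : 0 ≤ γ)
    (hsmall : ‖S‖ * γ < (1 - lam) * a)
    (hpert : ∀ f : X,
      (∑' n, |α n * g n f - β n * h n f| ^ p) ^ (1 / p) ≤
        lam * (∑' n, |α n * g n f| ^ p) ^ (1 / p) +
        mu * (∑' n, |β n * h n f| ^ p) ^ (1 / p) + γ * ‖f‖) :
    ∀ f : X,
      ((1 - lam) * ‖S‖⁻¹ * a - γ) / ((1 + mu) * b') * ‖f‖ ≤
        (∑' n, |h n f| ^ p) ^ (1 / p) ∧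
      (∑' n, |h n f| ^ p) ^ (1 / p) ≤ ((1 + lam) * B * a' + γ) / ((1 - mu) * b) * ‖f‖ :=
  weighted_frame_perturbation_general p hp g h B hg hgmem S hS hh α β a a' b b' ha hb hα hβ lam mu γ
    hlam hlam1 hmu hmu1 hpert
end

section
/- Let X and Θ be real Banach spaces, let U : X → Θ and S : Θ → X be bounded linear operators with S(U f) = f for all f ∈ X, and let V : X → Θ be a bounded linear operator. Let λ, μ ≥ 0 satisfy (λ‖U‖ + μ)·‖S‖ < 1, and assume ‖U f − V f‖ ≤ λ‖U f‖ + μ‖f‖ for all f ∈ X. Then: (i) ‖V f‖ ≤ ((1 + λ)‖U‖ + μ)·‖f‖ for all f ∈ X; (ii) the operator S ∘ V : X → X is bijective with ‖(S∘V)⁻¹‖ ≤ (1 − (λ‖U‖ + μ)‖S‖)⁻¹; (iii) the operator T := (S ∘ V)⁻¹ ∘ S : Θ → X satisfies T(V f) = f for all f ∈ X; and (iv) (1 − (λ‖U‖ + μ)‖S‖)·‖f‖ ≤ ‖S‖·‖V f‖ for all f ∈ X. -/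
/-!
`S ∘ U = id` turns the perturbation hypothesis into `‖f - S (V f)‖ ≤ c ‖f‖` with
`c = (λ‖U‖ + μ)‖S‖ < 1`. Hence `‖1 - S ∘ V‖ < 1`, so `S ∘ V` is invertible by the Neumann series,
and the same estimate gives the lower bound `(1 - c)‖f‖ ≤ ‖S (V f)‖`, which bounds the inverse
and, through `‖S (V f)‖ ≤ ‖S‖ ‖V f‖`, the frame inequality for `V`.
-/

namespace ContinuousLinearMap

variable {𝕜 E F : Type*} [NontriviallyNormedField 𝕜]
  [NormedAddCommGroup E] [NormedSpace 𝕜 E] [NormedAddCommGroup F] [NormedSpace 𝕜 F]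

theorem norm_sub_apply_le_of_perturbation {U V : E →L[𝕜] F} {lam mu : ℝ} (hlam : 0 ≤ lam)
    (hpert : ∀ f, ‖U f - V f‖ ≤ lam * ‖U f‖ + mu * ‖f‖) (f : E) :
    ‖U f - V f‖ ≤ (lam * ‖U‖ + mu) * ‖f‖ :=
  calc ‖U f - V f‖ ≤ lam * ‖U f‖ + mu * ‖f‖ := hpert f
    _ ≤ lam * (‖U‖ * ‖f‖) + mu * ‖f‖ := by gcongr; exact U.le_opNorm f
    _ = (lam * ‖U‖ + mu) * ‖f‖ := by ring

theorem norm_apply_le_of_perturbation {U V : E →L[𝕜] F} {lam mu : ℝ} (hlam : 0 ≤ lam)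
    (hpert : ∀ f, ‖U f - V f‖ ≤ lam * ‖U f‖ + mu * ‖f‖) (f : E) :
    ‖V f‖ ≤ ((1 + lam) * ‖U‖ + mu) * ‖f‖ :=
  calc ‖V f‖ = ‖U f - (U f - V f)‖ := by rw [sub_sub_cancel]
    _ ≤ ‖U f‖ + ‖U f - V f‖ := norm_sub_le _ _
    _ ≤ ‖U‖ * ‖f‖ + (lam * ‖U‖ + mu) * ‖f‖ :=
      add_le_add (U.le_opNorm f) (norm_sub_apply_le_of_perturbation hlam hpert f)
    _ = ((1 + lam) * ‖U‖ + mu) * ‖f‖ := by ring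

theorem norm_sub_comp_apply_le_of_perturbation {U V : E →L[𝕜] F} {S : F →L[𝕜] E}
    (hSU : ∀ f, S (U f) = f) {lam mu : ℝ} (hlam : 0 ≤ lam)
    (hpert : ∀ f, ‖U f - V f‖ ≤ lam * ‖U f‖ + mu * ‖f‖) (f : E) :
    ‖f - (S.comp V) f‖ ≤ (lam * ‖U‖ + mu) * ‖S‖ * ‖f‖ :=
  calc ‖f - (S.comp V) f‖ = ‖S (U f - V f)‖ := by rw [map_sub, hSU, comp_apply]
    _ ≤ ‖S‖ * ‖U f - V f‖ := S.le_opNorm _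
    _ ≤ ‖S‖ * ((lam * ‖U‖ + mu) * ‖f‖) := by
      gcongr; exact norm_sub_apply_le_of_perturbation hlam hpert f
    _ = (lam * ‖U‖ + mu) * ‖S‖ * ‖f‖ := by ring

theorem sub_mul_norm_le_norm_apply {A : E →L[𝕜] E} {c : ℝ} (h : ∀ f, ‖f - A f‖ ≤ c * ‖f‖)
    (f : E) : (1 - c) * ‖f‖ ≤ ‖A f‖ := by
  have := norm_sub_norm_le f (f - A f)
  rw [sub_sub_cancel] at this
  linarith [h f]

theorem norm_le_inv_of_rightInverse {A : E →L[𝕜] F} {W : F →L[𝕜] E} {C : ℝ} (hC : 0 < C)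
    (hA : ∀ f, C * ‖f‖ ≤ ‖A f‖) (hW : ∀ g, A (W g) = g) : ‖W‖ ≤ C⁻¹ := by
  refine W.opNorm_le_bound (inv_nonneg.mpr hC.le) fun g => ?_
  rw [inv_mul_eq_div, le_div_iff₀ hC, mul_comm]
  simpa only [hW] using hA (W g)

theorem exists_inverse_of_norm_sub_apply_le [CompleteSpace E] {A : E →L[𝕜] E} {c : ℝ}
    (hc : c < 1) (h : ∀ f, ‖f - A f‖ ≤ c * ‖f‖) :
    ∃ W : E →L[𝕜] E, (∀ f, W (A f) = f) ∧ (∀ f, A (W f) = f) ∧ ‖W‖ ≤ (1 - c)⁻¹ := by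
  have hnorm : ‖1 - A‖ < 1 :=
    ((1 - A).opNorm_le_bound (le_max_right c 0) fun f =>
      (h f).trans (by gcongr; exact le_max_left c 0)).trans_lt (max_lt hc one_pos)
  let u := Units.oneSub (1 - A) hnorm
  have hu : (u : E →L[𝕜] E) = A := sub_sub_cancel 1 A
  have hleft (f : E) : (↑u⁻¹ : E →L[𝕜] E) (A f) = f := by
    rw [← hu]; exact DFunLike.congr_fun u.inv_mul f
  have hright (f : E) : A ((↑u⁻¹ : E →L[𝕜] E) f) = f := by
    rw [← hu]; exact DFunLike.congr_fun u.mul_inv f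
  exact ⟨_, hleft, hright,
    norm_le_inv_of_rightInverse (sub_pos.mpr hc) (sub_mul_norm_le_norm_apply h) hright⟩

end ContinuousLinearMap

open ContinuousLinearMap

theorem analysis_perturbation_general
    {X Θ : Type*} [NormedAddCommGroup X] [NormedSpace ℝ X] [CompleteSpace X]
    [NormedAddCommGroup Θ] [NormedSpace ℝ Θ]
    (U V : X →L[ℝ] Θ) (S : Θ →L[ℝ] X)
    (hSU : ∀ f : X, S (U f) = f)
    (lam mu : ℝ) (hlam : 0 ≤ lam)
    (hsmall : (lam * ‖U‖ + mu) * ‖S‖ < 1)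
    (hpert : ∀ f : X, ‖U f - V f‖ ≤ lam * ‖U f‖ + mu * ‖f‖) :
    (∀ f : X, ‖V f‖ ≤ ((1 + lam) * ‖U‖ + mu) * ‖f‖) ∧
    Function.Bijective ⇑(S.comp V) ∧
    (∃ W : X →L[ℝ] X, (∀ f : X, W (S (V f)) = f) ∧ (∀ f : X, S (V (W f)) = f) ∧
      ‖W‖ ≤ (1 - (lam * ‖U‖ + mu) * ‖S‖)⁻¹ ∧
      ∀ f : X, (W.comp S) (V f) = f) ∧
    ∀ f : X, (1 - (lam * ‖U‖ + mu) * ‖S‖) * ‖f‖ ≤ ‖S‖ * ‖V f‖ := by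
  have hnear := norm_sub_comp_apply_le_of_perturbation hSU hlam hpert
  obtain ⟨W, hleft, hright, hW⟩ := exists_inverse_of_norm_sub_apply_le hsmall hnear
  refine ⟨norm_apply_le_of_perturbation hlam hpert,
    ⟨Function.LeftInverse.injective hleft, Function.RightInverse.surjective hright⟩,
    ⟨W, hleft, hright, hW, hleft⟩,
    fun f => (sub_mul_norm_le_norm_apply hnear f).trans (S.le_opNorm (V f))⟩

/-- Perturbation of the analysis operator (single-seminorm instance): if `U` is
the analysis operator of a frame with reconstruction operator `S` (`S ∘ U = id`)
and `V` is close to `U`, then `V` satisfies the frame inequalities, `S ∘ V` is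
invertible with `‖(S∘V)⁻¹‖ ≤ (1 − (λ‖U‖ + μ)‖S‖)⁻¹`, and `T := (S∘V)⁻¹ ∘ S`
reconstructs from `V`. -/
theorem analysis_perturbation
    {X Θ : Type*} [NormedAddCommGroup X] [NormedSpace ℝ X] [CompleteSpace X]
    [NormedAddCommGroup Θ] [NormedSpace ℝ Θ] [CompleteSpace Θ]
    (U V : X →L[ℝ] Θ) (S : Θ →L[ℝ] X)
    (hSU : ∀ f : X, S (U f) = f)
    (lam mu : ℝ) (hlam : 0 ≤ lam) (hmu : 0 ≤ mu)
    (hsmall : (lam * ‖U‖ + mu) * ‖S‖ < 1)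
    (hpert : ∀ f : X, ‖U f - V f‖ ≤ lam * ‖U f‖ + mu * ‖f‖) :
    (∀ f : X, ‖V f‖ ≤ ((1 + lam) * ‖U‖ + mu) * ‖f‖) ∧
    Function.Bijective ⇑(S.comp V) ∧
    (∃ W : X →L[ℝ] X, (∀ f : X, W (S (V f)) = f) ∧ (∀ f : X, S (V (W f)) = f) ∧
      ‖W‖ ≤ (1 - (lam * ‖U‖ + mu) * ‖S‖)⁻¹ ∧
      ∀ f : X, (W.comp S) (V f) = f) ∧
    ∀ f : X, (1 - (lam * ‖U‖ + mu) * ‖S‖) * ‖f‖ ≤ ‖S‖ * ‖V f‖ :=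
  analysis_perturbation_general U V S hSU lam mu hlam hsmall hpert
end
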